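/- If G has a Hamiltonian path visiting vertices in order v_{i_1},...,v_{i_n}, then the path in G' consisting of arcs (s,v_{i_1}^1), (v_{i_1}^1,v_{i_1}^2), (v_{i_1}^2,v_{i_2}^3), (v_{i_2}^3,v_{i_2}^4), ..., (v_{i_n}^{2n},t) is a well-defined s-t path in G' that intersects every vertical path P_1,...,P_n in exactly one vertical arc. -/

import Mathlib

abbrev Vtx (n : ℕ) := Sum Unit (Sum (Fin n × Fin (2 * n)) Unit)

def src (n : ℕ) : Vtx n := Sum.inl ()
def snk (n : ℕ) : Vtx n := Sum.inr (Sum.inr ())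
def mid {n : ℕ} (i : Fin n) (j : Fin (2 * n)) : Vtx n := Sum.inr (Sum.inl (i, j))

/-- Arcs of `G'` built from a digraph `G` on `n` vertices: vertical arcs
`s → v_i^1`, `v_i^j → v_i^{j+1}`, `v_i^{2n} → t` (layers are 0-indexed here),
and diagonal arcs `v_i^{2j} → v_k^{2j+1}` (0-indexed: from an odd layer index to
its successor) whenever `(v_i, v_k)` is an arc of `G`. -/
def Arc {n : ℕ} (G : Fin n → Fin n → Prop) : Vtx n → Vtx n → Prop
  | Sum.inl _, Sum.inr (Sum.inl (_, j)) => j.val = 0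
  | Sum.inr (Sum.inl (i, j)), Sum.inr (Sum.inl (k, j')) =>
      (i = k ∧ j'.val = j.val + 1) ∨ (G i k ∧ j.val % 2 = 1 ∧ j'.val = j.val + 1)
  | Sum.inr (Sum.inl (_, j)), Sum.inr (Sum.inr _) => j.val = 2 * n - 1
  | _, _ => False

def IsPath {α : Type*} (A : α → α → Prop) (s t : α) (p : List α) : Prop :=
  p.Chain' A ∧ p.head? = some s ∧ p.getLast? = some t

/-- A pair of endpoints forms a vertical arc `v_i^j → v_i^{j+1}` of the vertical
path `P_i`. -/
def isVertInner {n : ℕ} (i : Fin n) : Vtx n × Vtx n → Bool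
  | (Sum.inr (Sum.inl (k, _)), Sum.inr (Sum.inl (k', _))) => decide (k = i ∧ k' = i)
  | _ => false

/-- The explicit list of vertices
`s, v_{i_1}^1, v_{i_1}^2, v_{i_2}^3, v_{i_2}^4, …, v_{i_n}^{2n-1}, v_{i_n}^{2n}, t`
determined by the visiting order `σ` (so `i_{j+1} = σ j`). -/
def hamToPath (n : ℕ) (σ : Fin n → Fin n) : List (Vtx n) :=
  src n ::
    (((List.finRange n).flatMap fun j =>
      [mid (σ j) ⟨2 * j.val, by have := j.isLt; omega⟩,
       mid (σ j) ⟨2 * j.val + 1, by have := j.isLt; omega⟩]) ++ [snk n])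

/-! Position `k + 1` of the path (`k < 2n`) is the copy of `σ (k / 2)` in layer `k`. Consecutive
positions are joined by a vertical arc when `k` is even and by the diagonal arc of the `G`-arc
`(σ (k / 2), σ (k / 2 + 1))` when `k` is odd. Since `σ` is injective, the pair of positions
`(2j + 1, 2j + 2)` is the only consecutive pair lying on `P_{σ j}`: every other pair consists of
copies of two distinct vertices or contains `s` or `t`. -/

namespace List

theorem zip_tail_map_range {α : Type*} (f : ℕ → α) (m : ℕ) :
    ((range (m + 1)).map f).zip ((range (m + 1)).map f).tail =
      (range m).map fun k => (f k, f (k + 1)) :=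
  ext_getElem (by simp) fun k _ _ => by simp

theorem flatMap_range_pair {α : Type*} (g : ℕ → α) (n : ℕ) :
    (range n).flatMap (fun j => [g (2 * j), g (2 * j + 1)]) = (range (2 * n)).map g := by
  induction n with
  | zero => simp
  | succ m ih =>
    rw [range_succ, flatMap_append, ih, Nat.mul_succ, range_succ, range_succ]
    simp

end List

def hamVertex (n : ℕ) (σ : Fin n → Fin n) (k : ℕ) : Vtx n :=
  if h0 : k = 0 then src n
  else if hk : k ≤ 2 * n then mid (σ ⟨(k - 1) / 2, by omega⟩) ⟨k - 1, by omega⟩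
  else snk n

section hamVertex

variable {n : ℕ} (σ : Fin n → Fin n)

theorem hamVertex_zero : hamVertex n σ 0 = src n := rfl

theorem hamVertex_succ {k : ℕ} (hk : k < 2 * n) :
    hamVertex n σ (k + 1) = mid (σ ⟨k / 2, by omega⟩) ⟨k, hk⟩ := by
  simp [hamVertex, Nat.succ_le_of_lt hk]

theorem hamVertex_two_mul_add_one : hamVertex n σ (2 * n + 1) = snk n := by
  simp [hamVertex]

theorem hamToPath_eq_map_range :
    hamToPath n σ = (List.range (2 * n + 2)).map (hamVertex n σ) := by
  have hpair :
      (fun j : Fin n => [mid (σ j) ⟨2 * j.val, by omega⟩, mid (σ j) ⟨2 * j.val + 1, by omega⟩]) =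
      fun j : Fin n => [hamVertex n σ (2 * j + 1), hamVertex n σ (2 * j + 1 + 1)] := by
    funext j
    rw [hamVertex_succ σ (by omega), hamVertex_succ σ (by omega)]
    simp [Nat.mul_add_div]
  have hflat : (List.finRange n).flatMap
      (fun j : Fin n => [hamVertex n σ (2 * j + 1), hamVertex n σ (2 * j + 1 + 1)]) =
        (List.range (2 * n)).map fun k => hamVertex n σ (k + 1) := by
    rw [← List.flatMap_range_pair, ← List.map_coe_finRange_eq_range, List.flatMap_map]
  rw [hamToPath, hpair, hflat, List.range_succ_eq_map, List.range_succ]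
  simp [hamVertex_zero, hamVertex_two_mul_add_one]

theorem arc_hamVertex_succ {G : Fin n → Fin n → Prop} (hn : 0 < n)
    (hchain : ∀ j (h : j + 1 < n), G (σ ⟨j, Nat.lt_of_succ_lt h⟩) (σ ⟨j + 1, h⟩))
    {k : ℕ} (hk : k ≤ 2 * n) : Arc G (hamVertex n σ k) (hamVertex n σ (k + 1)) := by
  rcases k with _ | m
  · rw [hamVertex_zero, hamVertex_succ σ (by omega)]
    rfl
  rcases hk.lt_or_eq with hlt | hlast
  · rw [hamVertex_succ σ (by omega), hamVertex_succ σ hlt]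
    rcases Nat.even_or_odd m with ⟨r, rfl⟩ | ⟨r, rfl⟩
    · exact Or.inl ⟨congrArg σ (Fin.ext (by simp; omega)), rfl⟩
    · refine Or.inr ⟨?_, by simp, rfl⟩
      convert hchain r (by omega) using 2 <;> ext <;> simp <;> omega
  · rw [hamVertex_succ σ (by omega), show m + 1 + 1 = 2 * n + 1 by omega,
      hamVertex_two_mul_add_one]
    show m = 2 * n - 1
    omega

theorem isVertInner_hamVertex_iff (hσ : σ.Injective) {i j : Fin n} (hj : σ j = i) {k : ℕ}
    (hk : k ≤ 2 * n) :
    isVertInner i (hamVertex n σ k, hamVertex n σ (k + 1)) = true ↔ k = 2 * j + 1 := by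
  rcases k with _ | m
  · rw [hamVertex_zero]
    exact iff_of_false Bool.false_ne_true (by omega)
  rcases hk.lt_or_eq with hlt | hlast
  · rw [hamVertex_succ σ (by omega), hamVertex_succ σ hlt]
    change decide (_ = i ∧ _ = i) = true ↔ _
    simp only [decide_eq_true_eq, ← hj, hσ.eq_iff, Fin.ext_iff]
    omega
  · rw [hamVertex_succ σ (by omega), show m + 1 + 1 = 2 * n + 1 by omega,
      hamVertex_two_mul_add_one]
    exact iff_of_false Bool.false_ne_true (by omega)

end hamVertex

/-- If `G` has a Hamiltonian path visiting its vertices in the order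
`σ 0, σ 1, …, σ (n-1)`, then the path
`(s,v_{i_1}^1), (v_{i_1}^1,v_{i_1}^2), (v_{i_1}^2,v_{i_2}^3), …, (v_{i_n}^{2n},t)`
is a well-defined `s`-`t` path in `G'` that intersects every vertical path
`P_1, …, P_n` in exactly one vertical arc. -/
theorem hamPath_gives_path_meeting_all_verticals_once (n : ℕ) (hn : 0 < n)
    (G : Fin n → Fin n → Prop) (σ : Fin n → Fin n)
    (hbij : Function.Bijective σ)
    (hchain : ∀ j : ℕ, (h : j + 1 < n) → G (σ ⟨j, by omega⟩) (σ ⟨j + 1, h⟩)) :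
    IsPath (Arc G) (src n) (snk n) (hamToPath n σ) ∧
      ∀ i : Fin n,
        ((hamToPath n σ).zip (hamToPath n σ).tail).countP (isVertInner i) = 1 := by
  rw [hamToPath_eq_map_range]
  refine ⟨⟨?_, ?_, ?_⟩, fun i => ?_⟩
  · rw [List.Chain', List.isChain_map, List.isChain_range_succ]
    exact fun k hk => arc_hamVertex_succ σ hn hchain (by omega)
  · simp [List.range_succ_eq_map, hamVertex_zero]
  · simp [List.range_succ, hamVertex_two_mul_add_one]
  · obtain ⟨j, hj⟩ := hbij.surjective i
    rw [List.zip_tail_map_range, List.countP_map]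
    have hcount : ∀ k ∈ List.range (2 * n + 1),
        (isVertInner i ∘ fun k => (hamVertex n σ k, hamVertex n σ (k + 1))) k = true ↔
          (k == 2 * (j : ℕ) + 1) = true := fun k hk =>
      (isVertInner_hamVertex_iff σ hbij.injective hj
        (Nat.le_of_lt_succ (List.mem_range.mp hk))).trans beq_iff_eq.symm
    rw [List.countP_congr hcount]
    exact List.count_eq_one_of_mem List.nodup_range (List.mem_range.mpr (by omega))
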